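/- Suppose that ∂D satisfies the Aikawa condition with exponent q' for some q' ∈ (β₁, d]. Then there exists C > 0 such that for every A ∈ (0,∞], every x ∈ closure(D) and all a, r > 0, ∫_{B_D(x,r)} Φ(a/(δ_D(y) ∧ A)) dy ≤ C r^d Φ(a/((max(δ_D(x), r)) ∧ A)). -/

import Mathlib

open MeasureTheory Metric Set ENNReal Filter

noncomputable def deltaD {d : ℕ} (D : Set (EuclideanSpace ℝ (Fin d)))
    (x : EuclideanSpace ℝ (Fin d)) : ℝ :=
  Metric.infDist x (frontier D)

def Aikawa {d : ℕ} (D : Set (EuclideanSpace ℝ (Fin d))) (q : ℝ) : Prop :=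
  ∃ C₀ : ℝ, 1 ≤ C₀ ∧ ∀ x ∈ frontier D, ∀ r s : ℝ, 0 < s → s ≤ r →
    ENNReal.ofReal r < EMetric.diam (frontier D) →
    MeasureTheory.volume {y : EuclideanSpace ℝ (Fin d) |
        y ∈ Metric.ball x r ∧ Metric.infDist y (frontier D) < s} ≤
      ENNReal.ofReal (C₀ * (s / r) ^ q) * MeasureTheory.volume (Metric.ball x r)

lemma vol_ball_eq {d : ℕ} (hd : 1 ≤ d) :
    ∃ c : ℝ, 0 < c ∧ ∀ (x : EuclideanSpace ℝ (Fin d)) (r : ℝ), 0 ≤ r →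
      volume (Metric.ball x r) = ENNReal.ofReal (c * r ^ (d : ℝ)) := by
  have : Nonempty (Fin d) := ⟨⟨0, hd⟩⟩
  set κ : ℝ := Real.sqrt Real.pi ^ d / Real.Gamma (d / 2 + 1) with hκ
  have hκpos : 0 < κ := by
    apply div_pos (pow_pos (Real.sqrt_pos.2 Real.pi_pos) d)
    exact Real.Gamma_pos_of_pos (by positivity)
  refine ⟨κ, hκpos, fun x r hr => ?_⟩
  rw [EuclideanSpace.volume_ball, Fintype.card_fin]
  rw [← ENNReal.ofReal_pow hr, ← ENNReal.ofReal_mul (by positivity)]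
  rw [Real.rpow_natCast]
  rw [hκ]
  ring_nf

set_option maxHeartbeats 1000000 in
lemma aikawaExt {d : ℕ} (hd : 1 ≤ d) (D : Set (EuclideanSpace ℝ (Fin d)))
    (hfr : (frontier D).Nonempty) (q' : ℝ) (hq0 : 0 < q') (hq'd : q' ≤ (d:ℝ))
    (hAik : Aikawa D q') :
    ∃ C₁ : ℝ, 0 < C₁ ∧ ∀ (x : EuclideanSpace ℝ (Fin d)) (s r : ℝ), 0 < s → s ≤ r →
      volume {y : EuclideanSpace ℝ (Fin d) |
          y ∈ Metric.ball x r ∧ Metric.infDist y (frontier D) < s}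
        ≤ ENNReal.ofReal (C₁ * (s ^ q' * r ^ ((d:ℝ) - q'))) := by
  obtain ⟨c, hc, hvol⟩ := vol_ball_eq hd
  obtain ⟨C₀, hC₀, hA⟩ := hAik
  set F := frontier D with hF
  set Rr := Metric.diam F with hRr
  -- finite cover of the frontier, when it is compact
  obtain ⟨T, hTF, hTcov⟩ : ∃ T : Finset (EuclideanSpace ℝ (Fin d)), (↑T : Set _) ⊆ F ∧
      (EMetric.diam F ≠ ⊤ → 0 < Rr → F ⊆ ⋃ w ∈ T, Metric.ball w (Rr / 6)) := by
    by_cases h1 : EMetric.diam F ≠ ⊤ ∧ 0 < Rr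
    · have hK : IsCompact F :=
        isCompact_of_isClosed_isBounded isClosed_frontier
          (Metric.isBounded_iff_ediam_ne_top.2 h1.1)
      obtain ⟨t, htF, htfin, htcov⟩ := hK.finite_cover_balls
        (show (0:ℝ) < Rr / 6 by linarith [h1.2])
      refine ⟨htfin.toFinset, by simpa using htF, fun _ _ => ?_⟩
      simpa [Set.Finite.mem_toFinset] using htcov
    · exact ⟨∅, by simp, fun h2 h3 => absurd ⟨h2, h3⟩ h1⟩
  set CA : ℝ := C₀ * c * 3 ^ (d:ℝ) + c * 7 ^ (d:ℝ) + (T.card * C₀ * c + 1) with hCA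
  have hCApos : 0 < CA := by
    have h3 : (0:ℝ) < 3 ^ (d:ℝ) := Real.rpow_pos_of_pos (by norm_num) _
    have h7 : (0:ℝ) < 7 ^ (d:ℝ) := Real.rpow_pos_of_pos (by norm_num) _
    have h1 : (0:ℝ) ≤ T.card * C₀ * c := by positivity
    have h2 : (0:ℝ) < C₀ := by linarith
    nlinarith [mul_pos (mul_pos h2 hc) h3, mul_pos hc h7]
  refine ⟨CA, hCApos, fun x s r hs hsr => ?_⟩
  have hr : (0:ℝ) < r := lt_of_lt_of_le hs hsr
  have hbase : (0:ℝ) ≤ s ^ q' * r ^ ((d:ℝ) - q') := by positivity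
  by_cases h3r : ENNReal.ofReal (3*r) < EMetric.diam F
  · -- case (i): apply Aikawa directly at scale 3r
    rcases Set.eq_empty_or_nonempty
      {y : EuclideanSpace ℝ (Fin d) | y ∈ Metric.ball x r ∧ Metric.infDist y F < s}
      with hemp | ⟨y₀, hy₀⟩
    · rw [hemp]; simp
    obtain ⟨z, hzF, hz⟩ := (Metric.infDist_lt_iff hfr).1 hy₀.2
    have hsub : {y : EuclideanSpace ℝ (Fin d) | y ∈ Metric.ball x r ∧ Metric.infDist y F < s}
        ⊆ {y : EuclideanSpace ℝ (Fin d) | y ∈ Metric.ball z (3*r) ∧ Metric.infDist y F < s} := by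
      rintro y ⟨hy1, hy2⟩
      refine ⟨?_, hy2⟩
      have d1 : dist y x < r := Metric.mem_ball.1 hy1
      have d2 : dist x y₀ < r := by
        have := Metric.mem_ball.1 hy₀.1; rwa [dist_comm]
      have := dist_triangle4 y x y₀ z
      have : dist y z < 3*r := by
        have h4 := dist_triangle4 y x y₀ z
        linarith
      exact Metric.mem_ball.2 this
    calc volume {y : EuclideanSpace ℝ (Fin d) | y ∈ Metric.ball x r ∧ Metric.infDist y F < s}
        ≤ volume {y : EuclideanSpace ℝ (Fin d) |
            y ∈ Metric.ball z (3*r) ∧ Metric.infDist y F < s} := measure_mono hsub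
      _ ≤ ENNReal.ofReal (C₀ * (s / (3*r)) ^ q') * volume (Metric.ball z (3*r)) :=
          hA z hzF (3*r) s hs (by linarith) h3r
      _ = ENNReal.ofReal (C₀ * (s / (3*r)) ^ q') * ENNReal.ofReal (c * (3*r) ^ (d:ℝ)) := by
          rw [hvol z (3*r) (by linarith)]
      _ = ENNReal.ofReal ((C₀ * (s / (3*r)) ^ q') * (c * (3*r) ^ (d:ℝ))) := by
          rw [← ENNReal.ofReal_mul (by positivity)]
      _ ≤ ENNReal.ofReal (CA * (s ^ q' * r ^ ((d:ℝ) - q'))) := by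
          apply ENNReal.ofReal_le_ofReal
          have h3rpos : (0:ℝ) < 3*r := by linarith
          have e1 : (s/(3*r))^q' * (3*r)^(d:ℝ) = s^q' * (3*r)^((d:ℝ)-q') := by
            rw [Real.div_rpow hs.le h3rpos.le, Real.rpow_sub h3rpos]; ring
          have e2 : (3*r:ℝ)^((d:ℝ)-q') = 3^((d:ℝ)-q') * r^((d:ℝ)-q') :=
            Real.mul_rpow (by norm_num) hr.le
          have e3 : (3:ℝ)^((d:ℝ)-q') ≤ 3^(d:ℝ) :=
            Real.rpow_le_rpow_of_exponent_le (by norm_num) (by linarith)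
          have e4 : (0:ℝ) ≤ r^((d:ℝ)-q') := by positivity
          have e5 : (0:ℝ) ≤ s^q' := by positivity
          have lhs_eq : (C₀ * (s / (3*r)) ^ q') * (c * (3*r) ^ (d:ℝ))
              = (C₀ * c) * (s^q' * (3^((d:ℝ)-q') * r^((d:ℝ)-q'))) := by
            rw [show (C₀ * (s / (3*r)) ^ q') * (c * (3*r) ^ (d:ℝ))
                = (C₀ * c) * ((s/(3*r))^q' * (3*r)^(d:ℝ)) by ring, e1, e2]
          rw [lhs_eq]
          have step : (C₀ * c) * (s^q' * (3^((d:ℝ)-q') * r^((d:ℝ)-q')))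
              ≤ (C₀ * c) * (s^q' * (3^(d:ℝ) * r^((d:ℝ)-q'))) := by
            apply mul_le_mul_of_nonneg_left _ (by positivity)
            apply mul_le_mul_of_nonneg_left _ e5
            exact mul_le_mul_of_nonneg_right e3 e4
          refine le_trans step ?_
          have e6 : (C₀ * c) * (s^q' * (3^(d:ℝ) * r^((d:ℝ)-q')))
              = (C₀*c*3^(d:ℝ)) * (s^q' * r^((d:ℝ)-q')) := by ring
          rw [e6]
          apply mul_le_mul_of_nonneg_right _ hbase
          have h7 : (0:ℝ) < 7 ^ (d:ℝ) := Real.rpow_pos_of_pos (by norm_num) _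
          have hnn : (0:ℝ) ≤ T.card * C₀ * c := by positivity
          rw [hCA]
          nlinarith [mul_pos hc h7]
  · -- frontier is bounded and small compared to r
    have hdne : EMetric.diam F ≠ ⊤ := by
      intro h
      rw [h] at h3r
      exact h3r ENNReal.ofReal_lt_top
    have hbF : Bornology.IsBounded F := Metric.isBounded_iff_ediam_ne_top.2 hdne
    have hRr0 : (0:ℝ) ≤ Rr := Metric.diam_nonneg
    have hRr3 : Rr ≤ 3*r := by
      have h1 : EMetric.diam F ≤ ENNReal.ofReal (3*r) := not_lt.1 h3r
      have h2 := ENNReal.toReal_mono ENNReal.ofReal_ne_top h1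
      rw [ENNReal.toReal_ofReal (by linarith : (0:ℝ) ≤ 3*r)] at h2; exact h2
    by_cases hcase : Rr ≤ 6*s
    · -- branch (ii): small frontier, big s
      obtain ⟨z, hzF⟩ := hfr
      have hsub : {y : EuclideanSpace ℝ (Fin d) | y ∈ Metric.ball x r ∧ Metric.infDist y F < s}
          ⊆ Metric.ball z (7*s) := by
        rintro y ⟨hy1, hy2⟩
        obtain ⟨v, hvF, hv⟩ := (Metric.infDist_lt_iff ⟨z, hzF⟩).1 hy2
        have hvz : dist v z ≤ Rr := Metric.dist_le_diam_of_mem hbF hvF hzF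
        have := dist_triangle y v z
        exact Metric.mem_ball.2 (by linarith)
      calc volume {y : EuclideanSpace ℝ (Fin d) | y ∈ Metric.ball x r ∧ Metric.infDist y F < s}
          ≤ volume (Metric.ball z (7*s)) := measure_mono hsub
        _ = ENNReal.ofReal (c * (7*s) ^ (d:ℝ)) := hvol z (7*s) (by linarith)
        _ ≤ ENNReal.ofReal (CA * (s ^ q' * r ^ ((d:ℝ) - q'))) := by
            apply ENNReal.ofReal_le_ofReal
            have e1 : (7*s:ℝ)^(d:ℝ) = 7^(d:ℝ) * s^(d:ℝ) := Real.mul_rpow (by norm_num) hs.le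
            have e2 : (s:ℝ)^(d:ℝ) = s^q' * s^((d:ℝ)-q') := by
              rw [← Real.rpow_add hs]; ring_nf
            have e3 : (s:ℝ)^((d:ℝ)-q') ≤ r^((d:ℝ)-q') :=
              Real.rpow_le_rpow hs.le hsr (by linarith)
            have e5 : (0:ℝ) ≤ s^q' := by positivity
            have lhs_eq : c * (7*s) ^ (d:ℝ) = (c * 7^(d:ℝ)) * (s^q' * s^((d:ℝ)-q')) := by
              rw [e1, ← e2]; ring
            rw [lhs_eq]
            have step : (c * 7^(d:ℝ)) * (s^q' * s^((d:ℝ)-q'))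
                ≤ (c * 7^(d:ℝ)) * (s^q' * r^((d:ℝ)-q')) := by
              apply mul_le_mul_of_nonneg_left _ (by positivity)
              exact mul_le_mul_of_nonneg_left e3 e5
            refine le_trans step ?_
            apply mul_le_mul_of_nonneg_right _ hbase
            have h3 : (0:ℝ) < 3 ^ (d:ℝ) := Real.rpow_pos_of_pos (by norm_num) _
            have hnn : (0:ℝ) ≤ T.card * C₀ * c := by positivity
            have h2 : (0:ℝ) < C₀ := by linarith
            rw [hCA]
            nlinarith [mul_pos (mul_pos h2 hc) h3]
    · -- branch (iii): covering argument
      have hRrpos : (0:ℝ) < Rr := by linarith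
      have hcov := hTcov hdne hRrpos
      have hsub : {y : EuclideanSpace ℝ (Fin d) | y ∈ Metric.ball x r ∧ Metric.infDist y F < s}
          ⊆ ⋃ w ∈ T, {y : EuclideanSpace ℝ (Fin d) |
              y ∈ Metric.ball w (Rr/3) ∧ Metric.infDist y F < s} := by
        rintro y ⟨hy1, hy2⟩
        obtain ⟨v, hvF, hv⟩ := (Metric.infDist_lt_iff hfr).1 hy2
        have hvmem := hcov hvF
        simp only [Set.mem_iUnion] at hvmem
        obtain ⟨w, hwT, hw⟩ := hvmem
        have hvw : dist v w < Rr/6 := Metric.mem_ball.1 hw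
        have := dist_triangle y v w
        exact Set.mem_biUnion hwT ⟨Metric.mem_ball.2 (by linarith), hy2⟩
      have hdiam_eq : EMetric.diam F = ENNReal.ofReal Rr := (ENNReal.ofReal_toReal hdne).symm
      have hlt : ENNReal.ofReal (Rr/3) < EMetric.diam F := by
        rw [hdiam_eq]
        exact (ENNReal.ofReal_lt_ofReal_iff hRrpos).2 (by linarith)
      have hterm : ∀ w ∈ T,
          volume {y : EuclideanSpace ℝ (Fin d) |
              y ∈ Metric.ball w (Rr/3) ∧ Metric.infDist y F < s}
            ≤ ENNReal.ofReal ((C₀ * (s / (Rr/3)) ^ q') * (c * (Rr/3) ^ (d:ℝ))) := by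
        intro w hwT
        have := hA w (hTF hwT) (Rr/3) s hs (by linarith) hlt
        rw [hvol w (Rr/3) (by linarith)] at this
        rwa [← ENNReal.ofReal_mul (by positivity)] at this
      calc volume {y : EuclideanSpace ℝ (Fin d) | y ∈ Metric.ball x r ∧ Metric.infDist y F < s}
          ≤ volume (⋃ w ∈ T, {y : EuclideanSpace ℝ (Fin d) |
              y ∈ Metric.ball w (Rr/3) ∧ Metric.infDist y F < s}) := measure_mono hsub
        _ ≤ ∑ w ∈ T, volume {y : EuclideanSpace ℝ (Fin d) |
              y ∈ Metric.ball w (Rr/3) ∧ Metric.infDist y F < s} :=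
            measure_biUnion_finset_le T _
        _ ≤ T.card • ENNReal.ofReal ((C₀ * (s / (Rr/3)) ^ q') * (c * (Rr/3) ^ (d:ℝ))) :=
            Finset.sum_le_card_nsmul T _ _ hterm
        _ = ENNReal.ofReal ((T.card : ℝ) * ((C₀ * (s / (Rr/3)) ^ q') * (c * (Rr/3) ^ (d:ℝ)))) := by
            rw [nsmul_eq_mul, ENNReal.ofReal_mul (by positivity : (0:ℝ) ≤ (T.card:ℝ))]
            simp
        _ ≤ ENNReal.ofReal (CA * (s ^ q' * r ^ ((d:ℝ) - q'))) := by
            apply ENNReal.ofReal_le_ofReal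
            have hR3 : (0:ℝ) < Rr/3 := by linarith
            have e1 : (s/(Rr/3))^q' * (Rr/3)^(d:ℝ) = s^q' * (Rr/3)^((d:ℝ)-q') := by
              rw [Real.div_rpow hs.le hR3.le, Real.rpow_sub hR3]; ring
            have e3 : ((Rr/3):ℝ)^((d:ℝ)-q') ≤ r^((d:ℝ)-q') :=
              Real.rpow_le_rpow hR3.le (by linarith) (by linarith)
            have e5 : (0:ℝ) ≤ s^q' := by positivity
            have lhs_eq : (T.card : ℝ) * ((C₀ * (s / (Rr/3)) ^ q') * (c * (Rr/3) ^ (d:ℝ)))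
                = (T.card * C₀ * c) * (s^q' * (Rr/3)^((d:ℝ)-q')) := by
              rw [show (T.card : ℝ) * ((C₀ * (s / (Rr/3)) ^ q') * (c * (Rr/3) ^ (d:ℝ)))
                  = (T.card * C₀ * c) * ((s/(Rr/3))^q' * (Rr/3)^(d:ℝ)) by ring, e1]
            rw [lhs_eq]
            have hnn : (0:ℝ) ≤ T.card * C₀ * c := by positivity
            have step : (T.card * C₀ * c : ℝ) * (s^q' * (Rr/3)^((d:ℝ)-q'))
                ≤ (T.card * C₀ * c) * (s^q' * r^((d:ℝ)-q')) := by
              apply mul_le_mul_of_nonneg_left _ hnn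
              exact mul_le_mul_of_nonneg_left e3 e5
            refine le_trans step ?_
            apply mul_le_mul_of_nonneg_right _ hbase
            have h3 : (0:ℝ) < 3 ^ (d:ℝ) := Real.rpow_pos_of_pos (by norm_num) _
            have h7 : (0:ℝ) < 7 ^ (d:ℝ) := Real.rpow_pos_of_pos (by norm_num) _
            have h2 : (0:ℝ) < C₀ := by linarith
            rw [hCA]
            nlinarith [mul_pos (mul_pos h2 hc) h3, mul_pos hc h7]

set_option maxHeartbeats 1000000 in
lemma intRpow {d : ℕ} (hd : 1 ≤ d) (D : Set (EuclideanSpace ℝ (Fin d)))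
    (hDopen : IsOpen D) (hfr : (frontier D).Nonempty)
    (β₁ q' : ℝ) (hβ₁ : 0 ≤ β₁) (hβq' : β₁ < q') (hq'd : q' ≤ (d:ℝ)) (hAik : Aikawa D q') :
    ∃ C₂ : ℝ, 0 < C₂ ∧ ∀ (x : EuclideanSpace ℝ (Fin d)) (r : ℝ), 0 < r →
      (∫⁻ y in D ∩ Metric.ball x r,
          ENNReal.ofReal ((r / Metric.infDist y (frontier D)) ^ β₁))
        ≤ ENNReal.ofReal (C₂ * r ^ (d:ℝ)) := by
  obtain ⟨c, hc, hvol⟩ := vol_ball_eq hd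
  obtain ⟨C₁, hC₁, hAe⟩ := aikawaExt hd D hfr q' (lt_of_le_of_lt hβ₁ hβq') hq'd hAik
  set F := frontier D with hF
  set θ : ℝ := (2:ℝ) ^ (β₁ - q') with hθ
  have hθ0 : 0 < θ := Real.rpow_pos_of_pos (by norm_num) _
  have hθ1 : θ < 1 := Real.rpow_lt_one_of_one_lt_of_neg (by norm_num) (by linarith)
  have h2β : (0:ℝ) < 2 ^ β₁ := Real.rpow_pos_of_pos (by norm_num) _
  have h1θ : (0:ℝ) < 1 - θ := by linarith
  refine ⟨c + C₁ * 2 ^ β₁ * (1 - θ)⁻¹,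
    add_pos hc (mul_pos (mul_pos hC₁ h2β) (inv_pos.2 h1θ)), fun x r hr => ?_⟩
  set A0 : Set (EuclideanSpace ℝ (Fin d)) :=
    {y | y ∈ Metric.ball x r ∧ r ≤ Metric.infDist y F} with hA0
  set Ak : ℕ → Set (EuclideanSpace ℝ (Fin d)) := fun k =>
    {y | y ∈ Metric.ball x r ∧
      (r * (1/2)^(k+1) ≤ Metric.infDist y F ∧ Metric.infDist y F < r * (1/2)^k)} with hAk
  have hcover : D ∩ Metric.ball x r ⊆ A0 ∪ ⋃ k, Ak k := by
    rintro y ⟨hyD, hyB⟩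
    have hynF : y ∉ F := by
      rw [hF, hDopen.frontier_eq]
      exact fun h => h.2 hyD
    have hδpos : 0 < Metric.infDist y F :=
      (isClosed_frontier.notMem_iff_infDist_pos hfr).1 hynF
    by_cases hyr : r ≤ Metric.infDist y F
    · exact Or.inl ⟨hyB, hyr⟩
    push_neg at hyr
    have hex : ∃ n, r * (1/2)^(n+1) ≤ Metric.infDist y F := by
      obtain ⟨n, hn⟩ := exists_pow_lt_of_lt_one (div_pos hδpos hr)
        (by norm_num : (1/2:ℝ) < 1)
      refine ⟨n, ?_⟩
      have h1 : (1/2:ℝ)^(n+1) ≤ (1/2)^n :=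
        pow_le_pow_of_le_one (by norm_num) (by norm_num) (Nat.le_succ n)
      have h2 : (1/2:ℝ)^n * r < Metric.infDist y F := (lt_div_iff₀ hr).1 hn
      nlinarith [pow_pos (show (0:ℝ) < 1/2 by norm_num) (n+1)]
    set k := Nat.find hex with hk
    refine Or.inr (Set.mem_iUnion.2 ⟨k, hyB, Nat.find_spec hex, ?_⟩)
    rcases Nat.eq_zero_or_pos k with h0 | hpos
    · rw [h0]; simpa using hyr
    · have := Nat.find_min hex (Nat.sub_lt hpos one_pos)
      push_neg at this
      have hk1 : k - 1 + 1 = k := Nat.succ_pred_eq_of_pos hpos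
      rwa [hk1] at this
  have hmb : MeasurableSet (Metric.ball x r) := measurableSet_ball
  have hmδ : Measurable (fun y : EuclideanSpace ℝ (Fin d) => Metric.infDist y F) :=
    (continuous_infDist_pt F).measurable
  have hmA0 : MeasurableSet A0 := by
    have : A0 = Metric.ball x r ∩ (fun y => Metric.infDist y F) ⁻¹' (Set.Ici r) := rfl
    rw [this]
    exact hmb.inter (hmδ measurableSet_Ici)
  have hmAk : ∀ k, MeasurableSet (Ak k) := by
    intro k
    have : Ak k = Metric.ball x r ∩ (fun y => Metric.infDist y F) ⁻¹'
        (Set.Ico (r * (1/2)^(k+1)) (r * (1/2)^k)) := rfl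
    rw [this]
    exact hmb.inter (hmδ measurableSet_Ico)
  have bound0 : (∫⁻ y in A0, ENNReal.ofReal ((r / Metric.infDist y F) ^ β₁))
      ≤ ENNReal.ofReal (c * r ^ (d:ℝ)) := by
    have h1 : (∫⁻ y in A0, ENNReal.ofReal ((r / Metric.infDist y F) ^ β₁))
        ≤ ∫⁻ _ in A0, 1 := by
      apply setLIntegral_mono_ae' hmA0
      filter_upwards with y hy
      have hδ : 0 < Metric.infDist y F := lt_of_lt_of_le hr hy.2
      have : (r / Metric.infDist y F) ^ β₁ ≤ 1 :=
        Real.rpow_le_one (by positivity) ((div_le_one hδ).2 hy.2) hβ₁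
      calc ENNReal.ofReal ((r / Metric.infDist y F) ^ β₁) ≤ ENNReal.ofReal 1 :=
            ENNReal.ofReal_le_ofReal this
        _ = 1 := ENNReal.ofReal_one
    refine le_trans h1 ?_
    rw [setLIntegral_const, one_mul]
    calc volume A0 ≤ volume (Metric.ball x r) := measure_mono (fun y hy => hy.1)
      _ = ENNReal.ofReal (c * r ^ (d:ℝ)) := hvol x r hr.le
  have boundk : ∀ k : ℕ, (∫⁻ y in Ak k, ENNReal.ofReal ((r / Metric.infDist y F) ^ β₁))
      ≤ ENNReal.ofReal (C₁ * 2 ^ β₁ * r ^ (d:ℝ)) * (ENNReal.ofReal θ) ^ k := by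
    intro k
    have hpow : (0:ℝ) < (1/2:ℝ)^(k+1) := by positivity
    have hlo : (0:ℝ) < r * (1/2)^(k+1) := by positivity
    have h1 : (∫⁻ y in Ak k, ENNReal.ofReal ((r / Metric.infDist y F) ^ β₁))
        ≤ ∫⁻ _ in Ak k, ENNReal.ofReal (((2:ℝ)^(k+1)) ^ β₁) := by
      apply setLIntegral_mono_ae' (hmAk k)
      filter_upwards with y hy
      apply ENNReal.ofReal_le_ofReal
      have hδ : 0 < Metric.infDist y F := lt_of_lt_of_le hlo hy.2.1
      have hdiv : r / Metric.infDist y F ≤ (2:ℝ)^(k+1) := by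
        have h2 : r / Metric.infDist y F ≤ r / (r * (1/2)^(k+1)) :=
          div_le_div_of_nonneg_left hr.le hlo hy.2.1
        have h3 : r / (r * (1/2:ℝ)^(k+1)) = 2^(k+1) := by
          rw [one_div, inv_pow]
          field_simp
        rw [h3] at h2
        exact h2
      exact Real.rpow_le_rpow (by positivity) hdiv hβ₁
    refine le_trans h1 ?_
    rw [setLIntegral_const]
    have hμ : volume (Ak k)
        ≤ ENNReal.ofReal (C₁ * ((r * (1/2)^k) ^ q' * r ^ ((d:ℝ) - q'))) := by
      have hsub : Ak k ⊆ {y : EuclideanSpace ℝ (Fin d) |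
          y ∈ Metric.ball x r ∧ Metric.infDist y F < r * (1/2)^k} :=
        fun y hy => ⟨hy.1, hy.2.2⟩
      refine le_trans (measure_mono hsub) ?_
      apply hAe x (r * (1/2)^k) r (by positivity)
      calc r * (1/2:ℝ)^k ≤ r * 1 := by
            apply mul_le_mul_of_nonneg_left _ hr.le
            exact pow_le_one₀ (by norm_num) (by norm_num)
        _ = r := mul_one r
    calc ENNReal.ofReal (((2:ℝ)^(k+1)) ^ β₁) * volume (Ak k)
        ≤ ENNReal.ofReal (((2:ℝ)^(k+1)) ^ β₁) *
          ENNReal.ofReal (C₁ * ((r * (1/2)^k) ^ q' * r ^ ((d:ℝ) - q'))) :=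
          mul_le_mul_right hμ _
      _ = ENNReal.ofReal ((((2:ℝ)^(k+1)) ^ β₁) *
          (C₁ * ((r * (1/2)^k) ^ q' * r ^ ((d:ℝ) - q')))) := by
          rw [← ENNReal.ofReal_mul (by positivity)]
      _ = ENNReal.ofReal ((C₁ * 2 ^ β₁ * r ^ (d:ℝ)) * θ ^ k) := by
          congr 1
          have e1 : (r * (1/2:ℝ)^k) ^ q' = r ^ q' * ((1/2:ℝ)^k) ^ q' :=
            Real.mul_rpow hr.le (by positivity)
          have e2 : r ^ q' * r ^ ((d:ℝ) - q') = r ^ (d:ℝ) := by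
            rw [← Real.rpow_add hr]; ring_nf
          have e3 : ((2:ℝ)^(k+1)) ^ β₁ = (2:ℝ) ^ (((k:ℝ)+1) * β₁) := by
            rw [← Real.rpow_natCast (2:ℝ) (k+1), ← Real.rpow_mul (by norm_num)]
            push_cast
            ring_nf
          have e4 : ((1/2:ℝ)^k) ^ q' = (2:ℝ) ^ (-(k:ℝ) * q') := by
            rw [one_div, inv_pow, ← Real.rpow_natCast (2:ℝ) k,
              ← Real.rpow_neg (by norm_num : (0:ℝ) ≤ 2),
              ← Real.rpow_mul (by norm_num : (0:ℝ) ≤ 2)]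
            try ring_nf
          have e5 : θ ^ k = (2:ℝ) ^ ((β₁ - q') * (k:ℝ)) := by
            rw [hθ, ← Real.rpow_natCast ((2:ℝ) ^ (β₁ - q')) k,
              ← Real.rpow_mul (by norm_num : (0:ℝ) ≤ 2)]
          have e6 : (2:ℝ) ^ (((k:ℝ)+1) * β₁) * (2:ℝ) ^ (-(k:ℝ) * q')
              = (2:ℝ) ^ β₁ * (2:ℝ) ^ ((β₁ - q') * (k:ℝ)) := by
            rw [← Real.rpow_add (by norm_num : (0:ℝ) < 2),
              ← Real.rpow_add (by norm_num : (0:ℝ) < 2)]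
            ring_nf
          calc (((2:ℝ)^(k+1)) ^ β₁) * (C₁ * ((r * (1/2)^k) ^ q' * r ^ ((d:ℝ) - q')))
              = C₁ * ((((2:ℝ)^(k+1)) ^ β₁) * ((1/2:ℝ)^k) ^ q') * (r ^ q' * r ^ ((d:ℝ) - q')) := by
                rw [e1]; ring
            _ = C₁ * ((2:ℝ) ^ β₁ * θ ^ k) * r ^ (d:ℝ) := by
                rw [e2, e3, e4, e5, e6]
            _ = (C₁ * 2 ^ β₁ * r ^ (d:ℝ)) * θ ^ k := by ring
      _ = ENNReal.ofReal (C₁ * 2 ^ β₁ * r ^ (d:ℝ)) * (ENNReal.ofReal θ) ^ k := by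
          rw [ENNReal.ofReal_mul (by positivity), ENNReal.ofReal_pow hθ0.le]
  calc (∫⁻ y in D ∩ Metric.ball x r, ENNReal.ofReal ((r / Metric.infDist y F) ^ β₁))
      ≤ ∫⁻ y in A0 ∪ ⋃ k, Ak k, ENNReal.ofReal ((r / Metric.infDist y F) ^ β₁) :=
        lintegral_mono_set hcover
    _ ≤ (∫⁻ y in A0, ENNReal.ofReal ((r / Metric.infDist y F) ^ β₁))
        + ∫⁻ y in ⋃ k, Ak k, ENNReal.ofReal ((r / Metric.infDist y F) ^ β₁) :=
        lintegral_union_le _ _ _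
    _ ≤ ENNReal.ofReal (c * r ^ (d:ℝ))
        + ∑' k, ∫⁻ y in Ak k, ENNReal.ofReal ((r / Metric.infDist y F) ^ β₁) :=
        add_le_add bound0 (lintegral_iUnion_le _ _)
    _ ≤ ENNReal.ofReal (c * r ^ (d:ℝ))
        + ∑' k, ENNReal.ofReal (C₁ * 2 ^ β₁ * r ^ (d:ℝ)) * (ENNReal.ofReal θ) ^ k :=
        add_le_add le_rfl (ENNReal.tsum_le_tsum boundk)
    _ = ENNReal.ofReal (c * r ^ (d:ℝ))
        + ENNReal.ofReal (C₁ * 2 ^ β₁ * r ^ (d:ℝ)) * (1 - ENNReal.ofReal θ)⁻¹ := by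
        rw [ENNReal.tsum_mul_left, ENNReal.tsum_geometric]
    _ = ENNReal.ofReal ((c + C₁ * 2 ^ β₁ * (1 - θ)⁻¹) * r ^ (d:ℝ)) := by
        rw [show (1 : ℝ≥0∞) - ENNReal.ofReal θ = ENNReal.ofReal (1 - θ) by
            rw [ENNReal.ofReal_sub 1 hθ0.le, ENNReal.ofReal_one],
          ← ENNReal.ofReal_inv_of_pos h1θ,
          ← ENNReal.ofReal_mul (by positivity),
          ← ENNReal.ofReal_add (by positivity) (by positivity)]
        congr 1
        ring

noncomputable def truncMin (A : ℝ≥0∞) (r : ℝ) : ℝ := (min (ENNReal.ofReal r) A).toReal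

lemma truncMin_top {t : ℝ} (ht : 0 ≤ t) : truncMin ⊤ t = t := by
  simp [truncMin, ENNReal.toReal_ofReal ht]

lemma truncMin_ne_top {A : ℝ≥0∞} (hA : A ≠ ⊤) (t : ℝ) (ht : 0 ≤ t) :
    truncMin A t = min t A.toReal := by
  rw [truncMin, ENNReal.toReal_min ENNReal.ofReal_ne_top hA, ENNReal.toReal_ofReal ht]

lemma truncMin_pos {A : ℝ≥0∞} (hA : 0 < A) {t : ℝ} (ht : 0 < t) : 0 < truncMin A t := by
  rcases eq_or_ne A ⊤ with h | h
  · rw [h, truncMin_top ht.le]; exact ht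
  · rw [truncMin_ne_top h t ht.le]
    exact lt_min ht (ENNReal.toReal_pos hA.ne' h)

lemma truncMin_mono {A : ℝ≥0∞} {u v : ℝ} (hu : 0 ≤ u) (huv : u ≤ v) :
    truncMin A u ≤ truncMin A v := by
  apply ENNReal.toReal_mono
  · exact ((min_le_left _ _).trans_lt ENNReal.ofReal_lt_top).ne
  · exact min_le_min (ENNReal.ofReal_le_ofReal huv) le_rfl

lemma truncMin_ratio {A : ℝ≥0∞} (hA : 0 < A) {u v : ℝ} (hu : 0 < u) (huv : u ≤ v) :
    truncMin A v ≤ (v / u) * truncMin A u := by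
  rcases eq_or_ne A ⊤ with h | h
  · rw [h, truncMin_top hu.le, truncMin_top (hu.trans_le huv).le]
    rw [div_mul_cancel₀ _ hu.ne']
  · rw [truncMin_ne_top h u hu.le, truncMin_ne_top h v (hu.trans_le huv).le]
    have ha : 0 < A.toReal := ENNReal.toReal_pos hA.ne' h
    have h1 : (1:ℝ) ≤ v / u := (one_le_div hu).2 huv
    rcases le_total A.toReal u with hcase | hcase
    · rw [min_eq_right hcase]
      calc min v A.toReal ≤ A.toReal := min_le_right _ _
        _ = 1 * A.toReal := (one_mul _).symm
        _ ≤ (v / u) * A.toReal := mul_le_mul_of_nonneg_right h1 ha.le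
    · rw [min_eq_left hcase]
      calc min v A.toReal ≤ v := min_le_left _ _
        _ = (v / u) * u := (div_mul_cancel₀ _ hu.ne').symm

set_option maxHeartbeats 1000000 in
theorem stmt4 {d : ℕ} (hd : 1 ≤ d) (D : Set (EuclideanSpace ℝ (Fin d)))
    (hDopen : IsOpen D) (hDne : D.Nonempty) (hfr : (frontier D).Nonempty)
    (Φ : ℝ → ℝ) (β₁ C_Φ : ℝ) (hβ₁ : 0 ≤ β₁) (hC_Φ : 1 ≤ C_Φ)
    (hΦ0 : Φ 0 = 1) (hΦ1 : ∀ r : ℝ, 0 ≤ r → 1 ≤ Φ r)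
    (hΦmono : MonotoneOn Φ (Set.Ici 0)) (hΦcont : ContinuousOn Φ (Set.Ici 0))
    (hΦscale : ∀ s r : ℝ, 0 < s → s ≤ r → Φ r ≤ C_Φ * (r / s) ^ β₁ * Φ s)
    (q' : ℝ) (hβq' : β₁ < q') (hq'd : q' ≤ (d : ℝ)) (hAik : Aikawa D q') :
    ∃ C : ℝ, 0 < C ∧ ∀ A : ℝ≥0∞, 0 < A → ∀ x ∈ closure D, ∀ a r : ℝ, 0 < a → 0 < r →
      (∫⁻ y in D ∩ Metric.ball x r,
          ENNReal.ofReal (Φ (a / truncMin A (deltaD D y)))) ≤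
        ENNReal.ofReal (C * r ^ (d : ℝ) * Φ (a / truncMin A (max (deltaD D x) r))) := by
  obtain ⟨c, hc, hvol⟩ := vol_ball_eq hd
  obtain ⟨C₂, hC₂, hB⟩ := intRpow hd D hDopen hfr β₁ q' hβ₁ hβq' hq'd hAik
  have h2β : (0:ℝ) < 2 ^ β₁ := Real.rpow_pos_of_pos (by norm_num) _
  have h12β : (1:ℝ) ≤ 2 ^ β₁ := by
    calc (1:ℝ) = 1 ^ β₁ := (Real.one_rpow _).symm
      _ ≤ 2 ^ β₁ := Real.rpow_le_rpow zero_le_one one_le_two hβ₁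
  have hCΦpos : (0:ℝ) < C_Φ := lt_of_lt_of_le one_pos hC_Φ
  refine ⟨(C_Φ * 2 ^ β₁) * (2 ^ β₁ * (c + C₂)),
    mul_pos (mul_pos hCΦpos h2β) (mul_pos h2β (by linarith)), fun A hA x hx a r ha hr => ?_⟩
  simp only [deltaD]
  set b := max (Metric.infDist x (frontier D)) r with hb
  have hbpos : 0 < b := lt_of_lt_of_le hr (le_max_right _ _)
  have hbr : r ≤ b := le_max_right _ _
  set M := Φ (a / truncMin A b) with hM
  have hTb : 0 < truncMin A b := truncMin_pos hA hbpos
  have hM1 : 1 ≤ M := hΦ1 _ (by positivity)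
  have hMpos : 0 < M := lt_of_lt_of_le one_pos hM1
  have hδposS : ∀ y ∈ D ∩ Metric.ball x r, 0 < Metric.infDist y (frontier D) := by
    rintro y ⟨hyD, _⟩
    have hynF : y ∉ frontier D := by
      rw [hDopen.frontier_eq]; exact fun h => h.2 hyD
    exact (isClosed_frontier.notMem_iff_infDist_pos hfr).1 hynF
  -- pointwise bound
  have hpt : ∀ y ∈ D ∩ Metric.ball x r,
      ENNReal.ofReal (Φ (a / truncMin A (Metric.infDist y (frontier D))))
        ≤ ENNReal.ofReal ((C_Φ * 2 ^ β₁) * M)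
          * ENNReal.ofReal ((b / Metric.infDist y (frontier D)) ^ β₁) := by
    intro y hy
    set δy := Metric.infDist y (frontier D) with hδy
    have hδpos : 0 < δy := hδposS y hy
    have hδ2b : δy ≤ 2*b := by
      have h1 : Metric.infDist y (frontier D) ≤ Metric.infDist x (frontier D) + dist y x :=
        Metric.infDist_le_infDist_add_dist
      have h2 : dist y x < r := Metric.mem_ball.1 hy.2
      have h3 : Metric.infDist x (frontier D) ≤ b := le_max_left _ _
      have h4 : r ≤ b := hbr
      rw [hδy]; linarith
    have hTδ : 0 < truncMin A δy := truncMin_pos hA hδpos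
    have hrpow_nonneg : (0:ℝ) ≤ (b / δy) ^ β₁ := Real.rpow_nonneg (by positivity) _
    have key : Φ (a / truncMin A δy) ≤ (C_Φ * 2 ^ β₁) * ((b / δy) ^ β₁ * M) := by
      rcases le_or_gt δy b with hcase | hcase
      · have hTle : truncMin A δy ≤ truncMin A b := truncMin_mono hδpos.le hcase
        have hdivle : a / truncMin A b ≤ a / truncMin A δy :=
          div_le_div_of_nonneg_left ha.le hTδ hTle
        have hsc := hΦscale (a / truncMin A b) (a / truncMin A δy) (by positivity) hdivle
        have hratio : (a / truncMin A δy) / (a / truncMin A b)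
            = truncMin A b / truncMin A δy := by
          field_simp
        have hratio2 : truncMin A b / truncMin A δy ≤ b / δy := by
          rw [div_le_div_iff₀ hTδ hδpos]
          have h5 := truncMin_ratio hA hδpos hcase
          calc truncMin A b * δy ≤ ((b / δy) * truncMin A δy) * δy :=
                mul_le_mul_of_nonneg_right h5 hδpos.le
            _ = b * truncMin A δy := by field_simp
        have hrpow : ((a / truncMin A δy) / (a / truncMin A b)) ^ β₁ ≤ (b / δy) ^ β₁ := by
          rw [hratio]; exact Real.rpow_le_rpow (by positivity) hratio2 hβ₁
        calc Φ (a / truncMin A δy)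
            ≤ C_Φ * ((a / truncMin A δy) / (a / truncMin A b)) ^ β₁ * M := hsc
          _ ≤ C_Φ * (b / δy) ^ β₁ * M := by
              apply mul_le_mul_of_nonneg_right _ hMpos.le
              exact mul_le_mul_of_nonneg_left hrpow hCΦpos.le
          _ ≤ (C_Φ * 2 ^ β₁) * ((b / δy) ^ β₁ * M) := by
              have hXM : 0 ≤ (b / δy) ^ β₁ * M := mul_nonneg hrpow_nonneg hMpos.le
              nlinarith [mul_nonneg (mul_nonneg hCΦpos.le hXM) (sub_nonneg.2 h12β)]
      · have h1 : a / truncMin A δy ≤ a / truncMin A b :=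
          div_le_div_of_nonneg_left ha.le hTb (truncMin_mono hbpos.le hcase.le)
        have h2 : Φ (a / truncMin A δy) ≤ M :=
          hΦmono (Set.mem_Ici.2 (by positivity)) (Set.mem_Ici.2 (by positivity)) h1
        have h3 : (1:ℝ) ≤ 2 ^ β₁ * (b / δy) ^ β₁ := by
          rw [← Real.mul_rpow (by norm_num) (by positivity)]
          calc (1:ℝ) = 1 ^ β₁ := (Real.one_rpow _).symm
            _ ≤ (2 * (b / δy)) ^ β₁ := by
                apply Real.rpow_le_rpow zero_le_one _ hβ₁
                rw [show (2:ℝ) * (b / δy) = (2*b) / δy by ring]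
                exact (one_le_div hδpos).2 hδ2b
        calc Φ (a / truncMin A δy) ≤ M := h2
          _ = 1 * M := (one_mul _).symm
          _ ≤ (2 ^ β₁ * (b / δy) ^ β₁) * M := mul_le_mul_of_nonneg_right h3 hMpos.le
          _ ≤ (C_Φ * 2 ^ β₁) * ((b / δy) ^ β₁ * M) := by
              nlinarith [mul_nonneg (mul_nonneg h2β.le hrpow_nonneg) hMpos.le]
    calc ENNReal.ofReal (Φ (a / truncMin A δy))
        ≤ ENNReal.ofReal ((C_Φ * 2 ^ β₁) * ((b / δy) ^ β₁ * M)) :=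
          ENNReal.ofReal_le_ofReal key
      _ = ENNReal.ofReal ((C_Φ * 2 ^ β₁) * M) * ENNReal.ofReal ((b / δy) ^ β₁) := by
          rw [← ENNReal.ofReal_mul (by positivity)]
          congr 1
          ring
  have hSmeas : MeasurableSet (D ∩ Metric.ball x r) :=
    hDopen.measurableSet.inter measurableSet_ball
  have step1 : (∫⁻ y in D ∩ Metric.ball x r,
      ENNReal.ofReal (Φ (a / truncMin A (Metric.infDist y (frontier D)))))
      ≤ ENNReal.ofReal ((C_Φ * 2 ^ β₁) * M)
        * ∫⁻ y in D ∩ Metric.ball x r,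
            ENNReal.ofReal ((b / Metric.infDist y (frontier D)) ^ β₁) := by
    calc (∫⁻ y in D ∩ Metric.ball x r,
        ENNReal.ofReal (Φ (a / truncMin A (Metric.infDist y (frontier D)))))
        ≤ ∫⁻ y in D ∩ Metric.ball x r,
            ENNReal.ofReal ((C_Φ * 2 ^ β₁) * M)
              * ENNReal.ofReal ((b / Metric.infDist y (frontier D)) ^ β₁) :=
          setLIntegral_mono_ae' hSmeas (Filter.Eventually.of_forall hpt)
      _ = _ := lintegral_const_mul' _ _ ENNReal.ofReal_ne_top
  have step2 : (∫⁻ y in D ∩ Metric.ball x r,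
      ENNReal.ofReal ((b / Metric.infDist y (frontier D)) ^ β₁))
      ≤ ENNReal.ofReal (2 ^ β₁ * ((c + C₂) * r ^ (d:ℝ))) := by
    rcases le_or_gt (Metric.infDist x (frontier D)) (2*r) with hx2 | hx2
    · have hble : b ≤ 2*r := max_le hx2 (by linarith)
      have hpt2 : ∀ y ∈ D ∩ Metric.ball x r,
          ENNReal.ofReal ((b / Metric.infDist y (frontier D)) ^ β₁)
            ≤ ENNReal.ofReal (2 ^ β₁)
              * ENNReal.ofReal ((r / Metric.infDist y (frontier D)) ^ β₁) := by
        intro y hy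
        have hδpos := hδposS y hy
        rw [← ENNReal.ofReal_mul h2β.le]
        apply ENNReal.ofReal_le_ofReal
        rw [← Real.mul_rpow (by norm_num) (by positivity)]
        apply Real.rpow_le_rpow (by positivity) _ hβ₁
        rw [show (2:ℝ) * (r / Metric.infDist y (frontier D))
            = (2*r) / Metric.infDist y (frontier D) by ring]
        exact div_le_div_of_nonneg_right hble hδpos.le
      calc (∫⁻ y in D ∩ Metric.ball x r,
          ENNReal.ofReal ((b / Metric.infDist y (frontier D)) ^ β₁))
          ≤ ∫⁻ y in D ∩ Metric.ball x r,
              ENNReal.ofReal (2 ^ β₁)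
                * ENNReal.ofReal ((r / Metric.infDist y (frontier D)) ^ β₁) :=
            setLIntegral_mono_ae' hSmeas (Filter.Eventually.of_forall hpt2)
        _ = ENNReal.ofReal (2 ^ β₁) * ∫⁻ y in D ∩ Metric.ball x r,
              ENNReal.ofReal ((r / Metric.infDist y (frontier D)) ^ β₁) :=
            lintegral_const_mul' _ _ ENNReal.ofReal_ne_top
        _ ≤ ENNReal.ofReal (2 ^ β₁) * ENNReal.ofReal (C₂ * r ^ (d:ℝ)) :=
            mul_le_mul_right (hB x r hr) _
        _ = ENNReal.ofReal (2 ^ β₁ * (C₂ * r ^ (d:ℝ))) :=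
            (ENNReal.ofReal_mul h2β.le).symm
        _ ≤ ENNReal.ofReal (2 ^ β₁ * ((c + C₂) * r ^ (d:ℝ))) := by
            apply ENNReal.ofReal_le_ofReal
            have hrd : (0:ℝ) ≤ r ^ (d:ℝ) := by positivity
            nlinarith [mul_nonneg (mul_nonneg h2β.le hc.le) hrd, mul_nonneg (mul_nonneg h2β.le hC₂.le) hrd]
    · have hbx : b = Metric.infDist x (frontier D) := max_eq_left (by linarith)
      have hpt2 : ∀ y ∈ D ∩ Metric.ball x r,
          ENNReal.ofReal ((b / Metric.infDist y (frontier D)) ^ β₁)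
            ≤ ENNReal.ofReal (2 ^ β₁) := by
        intro y hy
        have hδpos := hδposS y hy
        apply ENNReal.ofReal_le_ofReal
        have h1 : Metric.infDist x (frontier D)
            ≤ Metric.infDist y (frontier D) + dist x y :=
          Metric.infDist_le_infDist_add_dist
        have h2 : dist x y < r := by
          rw [dist_comm]; exact Metric.mem_ball.1 hy.2
        have h3 : b ≤ 2 * Metric.infDist y (frontier D) := by
          rw [hbx]; linarith
        refine Real.rpow_le_rpow (by positivity) ?_ hβ₁
        rw [div_le_iff₀ hδpos]
        linarith
      calc (∫⁻ y in D ∩ Metric.ball x r,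
          ENNReal.ofReal ((b / Metric.infDist y (frontier D)) ^ β₁))
          ≤ ∫⁻ _ in D ∩ Metric.ball x r, ENNReal.ofReal (2 ^ β₁) :=
            setLIntegral_mono_ae' hSmeas (Filter.Eventually.of_forall hpt2)
        _ = ENNReal.ofReal (2 ^ β₁) * volume (D ∩ Metric.ball x r) :=
            setLIntegral_const _ _
        _ ≤ ENNReal.ofReal (2 ^ β₁) * ENNReal.ofReal (c * r ^ (d:ℝ)) := by
            apply mul_le_mul_right
            rw [← hvol x r hr.le]
            exact measure_mono Set.inter_subset_right
        _ = ENNReal.ofReal (2 ^ β₁ * (c * r ^ (d:ℝ))) :=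
            (ENNReal.ofReal_mul h2β.le).symm
        _ ≤ ENNReal.ofReal (2 ^ β₁ * ((c + C₂) * r ^ (d:ℝ))) := by
            apply ENNReal.ofReal_le_ofReal
            have hrd : (0:ℝ) ≤ r ^ (d:ℝ) := by positivity
            nlinarith [mul_nonneg (mul_nonneg h2β.le hc.le) hrd, mul_nonneg (mul_nonneg h2β.le hC₂.le) hrd]
  calc (∫⁻ y in D ∩ Metric.ball x r,
      ENNReal.ofReal (Φ (a / truncMin A (Metric.infDist y (frontier D)))))
      ≤ ENNReal.ofReal ((C_Φ * 2 ^ β₁) * M)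
        * ∫⁻ y in D ∩ Metric.ball x r,
            ENNReal.ofReal ((b / Metric.infDist y (frontier D)) ^ β₁) := step1
    _ ≤ ENNReal.ofReal ((C_Φ * 2 ^ β₁) * M)
        * ENNReal.ofReal (2 ^ β₁ * ((c + C₂) * r ^ (d:ℝ))) :=
        mul_le_mul_right step2 _
    _ = ENNReal.ofReal ((C_Φ * 2 ^ β₁) * (2 ^ β₁ * (c + C₂)) * r ^ (d:ℝ) * M) := by
        rw [← ENNReal.ofReal_mul (by positivity)]
        congr 1
        ring
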